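/- arXiv:1204.5681 — 2 statements merged into one kernel-verified Lean document; each statement's English description precedes it below -/
import Mathlib

section
/- Let G be a locally finitely presented Grothendieck category with a set S of finitely presented generators, and T a hereditary torsion class of finite type with quotient functor q: G → G/T. Then G/T is locally finitely presented and q(S) is a set of finitely presented generators of G/T. -/
open CategoryTheory Limits Opposite

universe v u u'

namespace Paper

variable {C : Type u} [Category.{v} C]

/-- An object `X` is finitely presented if `Hom(X, -)` preserves filtered colimits. -/
def FinitelyPresented (X : C) : Prop :=
  Nonempty (PreservesFilteredColimitsOfSize.{v, v} (coyoneda.obj (op X)))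

/-- A category is locally finitely presented if it has a set of finitely presented
generators and every object is a filtered direct limit of finitely presented objects. -/
def LocallyFinitelyPresented (C : Type u) [Category.{v} C] : Prop :=
  (∃ S : Set C, (∀ X ∈ S, FinitelyPresented X) ∧ ObjectProperty.IsSeparating S) ∧
    ∀ M : C, ∃ (J : Type v) (_ : SmallCategory J) (_ : IsFiltered J) (D : J ⥤ C)
      (c : Cocone D), Nonempty (IsColimit c) ∧ Nonempty (c.pt ≅ M) ∧
        ∀ j : J, FinitelyPresented (D.obj j)

/-- A Grothendieck category: an abelian category with exact filtered colimits (AB5)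
and a generator. -/
def IsGrothendieck (C : Type u) [Category.{v} C] [Abelian C]
    [HasColimitsOfSize.{v, v} C] : Prop :=
  (∀ (J : Type v) [SmallCategory J] [IsFiltered J],
      Nonempty (PreservesFiniteLimits (colim : (J ⥤ C) ⥤ C))) ∧
    ∃ G : C, IsSeparator G

/-- A hereditary torsion class: a class of objects closed under subobjects, quotients,
extensions and coproducts. -/
def IsHereditaryTorsionClass (T : Set C) [Abelian C] [HasColimitsOfSize.{v, v} C] :
    Prop :=
  (∀ (X Y : C) (f : X ⟶ Y), Mono f → Y ∈ T → X ∈ T) ∧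
  (∀ (X Y : C) (f : X ⟶ Y), Epi f → X ∈ T → Y ∈ T) ∧
  (∀ (S : ShortComplex C), S.ShortExact → S.X₁ ∈ T → S.X₃ ∈ T → S.X₂ ∈ T) ∧
  (∀ (ι : Type v) (f : ι → C), (∀ x : ι, f x ∈ T) → (∐ f) ∈ T)

/-! `Hom(q X, M) ≅ Hom(X, ι M)` and `ι` preserves filtered colimits, so `q` preserves finite
presentation. As `ι` is fully faithful, every `M` is `q (ι M)`: applying the colimit-preserving
`q` to a filtered presentation of `ι M` by finitely presented objects presents `M`, and
generators of `G` go to generators of `D`. -/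

section Adjunction

variable {D : Type u'} [Category.{v} D] {L : C ⥤ D} {R : D ⥤ C}

lemma finitelyPresented_obj_of_adjunction (adj : L ⊣ R)
    [PreservesFilteredColimitsOfSize.{v, v} R] {X : C} (hX : FinitelyPresented X) :
    FinitelyPresented (L.obj X) := by
  obtain ⟨hX⟩ := hX
  let e : R ⋙ coyoneda.obj (op X) ≅ coyoneda.obj (op (L.obj X)) :=
    NatIso.ofComponents (fun M => (Equiv.toIso (adj.homEquiv X M)).symm) (by
      intro M N f
      ext g
      simp [Adjunction.homEquiv_naturality_right_symm])
  exact ⟨⟨fun J _ _ => preservesColimitsOfShape_of_natIso e⟩⟩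

lemma isSeparating_image_of_adjunction (adj : L ⊣ R) [R.Faithful] {S : Set C}
    (hS : ObjectProperty.IsSeparating S) : ObjectProperty.IsSeparating (L.obj '' S) := by
  intro M N f g h
  refine R.map_injective (hS _ _ fun X hX k => ?_)
  apply (adj.homEquiv X N).symm.injective
  simp only [Adjunction.homEquiv_naturality_right_symm]
  exact h _ ⟨X, hX, rfl⟩ _

lemma locallyFinitelyPresented_of_adjunction (adj : L ⊣ R) [IsIso adj.counit]
    [PreservesFilteredColimitsOfSize.{v, v} R] (hC : LocallyFinitelyPresented C) :
    LocallyFinitelyPresented D := by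
  obtain ⟨⟨S, hSfp, hSsep⟩, hcolim⟩ := hC
  have : R.Faithful := adj.fullyFaithfulROfIsIsoCounit.faithful
  refine ⟨⟨L.obj '' S, ?_, isSeparating_image_of_adjunction adj hSsep⟩, fun M => ?_⟩
  · rintro _ ⟨X, hX, rfl⟩
    exact finitelyPresented_obj_of_adjunction adj (hSfp X hX)
  · obtain ⟨J, _, _, F, c, ⟨hc⟩, ⟨e⟩, hF⟩ := hcolim (R.obj M)
    have := adj.leftAdjoint_preservesColimits
    exact ⟨J, _, ‹_›, F ⋙ L, L.mapCocone c, ⟨isColimitOfPreserves L hc⟩,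
      ⟨L.mapIso e ≪≫ asIso (adj.counit.app M)⟩,
      fun j => finitelyPresented_obj_of_adjunction adj (hF j)⟩

end Adjunction

theorem stmt7_general (G : Type u) [Category.{v} G]
    (hlfp : LocallyFinitelyPresented G)
    (S : Set G) (hSfp : ∀ X ∈ S, FinitelyPresented X) (hSsep : ObjectProperty.IsSeparating S)
    (D : Type u') [Category.{v} D]
    (q : G ⥤ D) (ι : D ⥤ G) (adj : q ⊣ ι)
    (hcounit : IsIso adj.counit)
    (hft : Nonempty (PreservesFilteredColimitsOfSize.{v, v} ι)) :
    LocallyFinitelyPresented D ∧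
    ObjectProperty.IsSeparating (q.obj '' S) ∧
    (∀ X ∈ S, FinitelyPresented (q.obj X)) := by
  obtain ⟨hft⟩ := hft
  have : ι.Faithful := adj.fullyFaithfulROfIsIsoCounit.faithful
  exact ⟨locallyFinitelyPresented_of_adjunction adj hlfp,
    isSeparating_image_of_adjunction adj hSsep,
    fun X hX => finitelyPresented_obj_of_adjunction adj (hSfp X hX)⟩

/-- Let `G` be a locally finitely presented Grothendieck category with a set `S` of
finitely presented generators, and `T` a hereditary torsion class of finite type with
quotient functor `q : G ⥤ G/T` (represented by any exact functor `q` with fully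
faithful right adjoint `ι` whose kernel is exactly `T`, `ι` preserving direct limits).
Then `G/T` is locally finitely presented and `q(S)` is a set of finitely presented
generators of `G/T`. -/
theorem stmt7 (G : Type u) [Category.{v} G] [Abelian G] [HasColimitsOfSize.{v, v} G]
    (hG : IsGrothendieck G) (hlfp : LocallyFinitelyPresented G)
    (S : Set G) (hSfp : ∀ X ∈ S, FinitelyPresented X) (hSsep : ObjectProperty.IsSeparating S)
    (T : Set G) (hT : IsHereditaryTorsionClass T)
    (D : Type u') [Category.{v} D] [Abelian D]
    (q : G ⥤ D) (ι : D ⥤ G) (adj : q ⊣ ι)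
    [PreservesFiniteLimits q] (hcounit : IsIso adj.counit)
    (hker : ∀ M : G, IsZero (q.obj M) ↔ M ∈ T)
    (hft : Nonempty (PreservesFilteredColimitsOfSize.{v, v} ι)) :
    LocallyFinitelyPresented D ∧
    ObjectProperty.IsSeparating (q.obj '' S) ∧
    (∀ X ∈ S, FinitelyPresented (q.obj X)) :=
  stmt7_general G hlfp S hSfp hSsep D q ι adj hcounit hft

end Paper
end

section
/- Let A = ⊕_{n≥0} A_n be a positively graded ring such that A_{≥m} is a finitely generated left ideal for all m ≥ k (some k > 0). Then the class T of virtually finitely graded left graded A-modules (graded modules all of whose finitely generated graded submodules are finitely graded, i.e., nonzero in only finitely many degrees) is a hereditary torsion class in the category A-Gr of graded A-modules, closed under degree shifts. -/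
universe u v

open DirectSum

/-- The data of a `ℤ`-graded module over a `ℤ`-graded ring `(A, 𝒜)`: a grading by
additive subgroups, compatible with the ring grading, whose direct sum is internal. -/
structure GradedModuleData (A : Type u) [Ring A] (𝒜 : ℤ → AddSubgroup A)
    (M : Type v) [AddCommGroup M] [Module A M] where
  gr : ℤ → AddSubgroup M
  smul_mem : ∀ (i j : ℤ) (a : A) (x : M), a ∈ 𝒜 i → x ∈ gr j → a • x ∈ gr (i + j)
  isInternal : DirectSum.IsInternal gr

namespace GradedModuleData

variable {A : Type u} [Ring A] {𝒜 : ℤ → AddSubgroup A}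

/-- A submodule is graded (homogeneous) if it is spanned by its homogeneous elements. -/
def IsHomogeneous {M : Type v} [AddCommGroup M] [Module A M]
    (g : GradedModuleData A 𝒜 M) (N : Submodule A M) : Prop :=
  N = Submodule.span A {x : M | x ∈ N ∧ ∃ n : ℤ, x ∈ g.gr n}

/-- A submodule is finitely graded if it is nonzero in only finitely many degrees. -/
def IsFinitelyGraded {M : Type v} [AddCommGroup M] [Module A M]
    (g : GradedModuleData A 𝒜 M) (N : Submodule A M) : Prop :=
  {n : ℤ | ∃ x : M, x ∈ N ∧ x ∈ g.gr n ∧ x ≠ 0}.Finite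

/-- A graded module is virtually finitely graded if every finitely generated graded
submodule is finitely graded. -/
def IsVFG {M : Type v} [AddCommGroup M] [Module A M]
    (g : GradedModuleData A 𝒜 M) : Prop :=
  ∀ N : Submodule A M, g.IsHomogeneous N → N.FG → g.IsFinitelyGraded N

/-- The canonical grading on a direct sum of graded modules. -/
def directSumGrading {ι : Type v} {M : ι → Type v} [∀ i, AddCommGroup (M i)]
    [∀ i, Module A (M i)] (g : ∀ i, GradedModuleData A 𝒜 (M i)) (n : ℤ) :
    AddSubgroup (⨁ i, M i) where
  carrier := {x | ∀ i, x i ∈ (g i).gr n}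
  zero_mem' := by
    intro i
    rw [DirectSum.zero_apply]
    exact zero_mem _
  add_mem' := by
    intro x y hx hy i
    rw [DirectSum.add_apply]
    exact add_mem (hx i) (hy i)
  neg_mem' := by
    intro x hx i
    rw [DFinsupp.neg_apply]
    exact neg_mem (hx i)

end GradedModuleData

open GradedModuleData

/-- The left ideal `A_{≥ m}` of a graded ring. -/
def idealGE {A : Type u} [Ring A] (𝒜 : ℤ → AddSubgroup A) (m : ℤ) : Submodule A A :=
  Submodule.span A {a : A | ∃ n : ℤ, m ≤ n ∧ a ∈ 𝒜 n}

/-!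
Closure under graded submodules, quotients, coproducts and shifts is formal: a finitely generated
graded submodule is generated by finitely many homogeneous elements, and graded maps do not create
new degrees. The content is closure under extensions `0 → M₁ → M₂ → M₃ → 0`. Let `N ⊆ M₂` be
generated by homogeneous `t` of degrees `d t`. By positivity of the grading, `N` vanishes below
`min d t`, and its image in `M₃` vanishes above some `D₀`. For `D > D₀` large enough, the tail
`N_{≥ D} = ∑ₜ A_{≥ D - d t} t` is finitely generated (because the ideals `A_{≥ m}` are) and lies
in `M₁`, hence is finitely graded; so `N` has only finitely many degrees.
-/

namespace GradedModuleData

variable {A : Type u} [Ring A] {𝒜 : ℤ → AddSubgroup A}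

section Module

variable {M : Type v} [AddCommGroup M] [Module A M] (g : GradedModuleData A 𝒜 M)
variable {M' : Type v} [AddCommGroup M'] [Module A M'] (g' : GradedModuleData A 𝒜 M')

noncomputable def proj (n : ℤ) : M →+ M :=
  letI := g.isInternal.chooseDecomposition
  (g.gr n).subtype.comp
    ((DFinsupp.evalAddMonoidHom n).comp (DirectSum.decomposeAddEquiv g.gr).toAddMonoidHom)

def IsGradedHom (f : M →ₗ[A] M') : Prop :=
  ∀ (n : ℤ) (x : M), x ∈ g.gr n → f x ∈ g'.gr n

def degrees (N : Submodule A M) : Set ℤ :=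
  {n | ∃ x : M, x ∈ N ∧ x ∈ g.gr n ∧ x ≠ 0}

theorem isFinitelyGraded_iff_finite_degrees (N : Submodule A M) :
    g.IsFinitelyGraded N ↔ (g.degrees N).Finite :=
  Iff.rfl

theorem proj_mem (n : ℤ) (x : M) : g.proj n x ∈ g.gr n :=
  letI := g.isInternal.chooseDecomposition
  (DirectSum.decompose g.gr x n).2

theorem proj_of_mem_same {n : ℤ} {x : M} (hx : x ∈ g.gr n) : g.proj n x = x :=
  letI := g.isInternal.chooseDecomposition
  DirectSum.decompose_of_mem_same g.gr hx

theorem proj_of_mem_ne {m n : ℤ} {x : M} (hx : x ∈ g.gr m) (h : m ≠ n) : g.proj n x = 0 :=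
  letI := g.isInternal.chooseDecomposition
  DirectSum.decompose_of_mem_ne g.gr hx h

theorem exists_sum_proj (x : M) : ∃ s : Finset ℤ, ∑ n ∈ s, g.proj n x = x := by
  classical
  let := g.isInternal.chooseDecomposition
  exact ⟨(DirectSum.decompose g.gr x).support, DirectSum.sum_support_decompose g.gr x⟩

theorem induction_on {p : M → Prop} (zero : p 0) (mem_gr : ∀ (n : ℤ) (x : M), x ∈ g.gr n → p x)
    (add : ∀ x y, p x → p y → p (x + y)) (x : M) : p x :=
  letI := g.isInternal.chooseDecomposition
  DirectSum.Decomposition.inductionOn g.gr zero (fun {n} x => mem_gr n x x.2) add x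

variable {g g'}

theorem IsGradedHom.map_proj {f : M →ₗ[A] M'} (hf : g.IsGradedHom g' f) (n : ℤ) (x : M) :
    f (g.proj n x) = g'.proj n (f x) := by
  induction x using g.induction_on with
  | zero => simp only [map_zero]
  | mem_gr m x hx =>
    rcases eq_or_ne m n with rfl | hmn
    · rw [g.proj_of_mem_same hx, g'.proj_of_mem_same (hf m x hx)]
    · rw [g.proj_of_mem_ne hx hmn, g'.proj_of_mem_ne (hf m x hx) hmn, map_zero]
  | add x y hx hy => rw [map_add, map_add, map_add, hx, hy, map_add]

theorem isHomogeneous_span {S : Set M} (hS : ∀ s ∈ S, ∃ n, s ∈ g.gr n) :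
    g.IsHomogeneous (Submodule.span A S) :=
  le_antisymm (Submodule.span_le.2 fun s hs => Submodule.subset_span
      ⟨Submodule.subset_span hs, hS s hs⟩)
    (Submodule.span_le.2 fun _ hx => hx.1)

theorem isHomogeneous_of_forall_proj_mem {N : Submodule A M}
    (h : ∀ x ∈ N, ∀ n, g.proj n x ∈ N) : g.IsHomogeneous N := by
  refine le_antisymm (fun x hx => ?_) (Submodule.span_le.2 fun _ hx => hx.1)
  obtain ⟨s, hs⟩ := g.exists_sum_proj x
  rw [← hs]
  exact sum_mem fun n _ => Submodule.subset_span ⟨h x hx n, n, g.proj_mem n x⟩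

theorem IsHomogeneous.exists_finset {N : Submodule A M} (hN : g.IsHomogeneous N) (hFG : N.FG) :
    ∃ T : Finset M, (∀ t ∈ T, ∃ n, t ∈ g.gr n) ∧ N = Submodule.span A T := by
  rw [hN, Submodule.fg_span_iff_fg_span_finset_subset] at hFG
  obtain ⟨T, hTS, hspan⟩ := hFG
  exact ⟨T, fun t ht => (hTS ht).2, hN.trans hspan⟩

theorem IsGradedHom.degrees_subset_map {f : M →ₗ[A] M'} (hf : g.IsGradedHom g' f)
    (hinj : Function.Injective f) (N : Submodule A M) : g.degrees N ⊆ g'.degrees (N.map f) :=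
  fun n ⟨x, hx, hxn, hx0⟩ =>
    ⟨f x, Submodule.mem_map_of_mem hx, hf n x hxn, (map_ne_zero_iff f hinj).2 hx0⟩

theorem IsGradedHom.exists_mem_gr_eq {f : M →ₗ[A] M'} (hf : g.IsGradedHom g' f)
    (hsurj : Function.Surjective f) {n : ℤ} {y : M'} (hy : y ∈ g'.gr n) :
    ∃ x ∈ g.gr n, f x = y := by
  obtain ⟨z, rfl⟩ := hsurj y
  exact ⟨g.proj n z, g.proj_mem n z, by rw [hf.map_proj, g'.proj_of_mem_same hy]⟩

theorem IsGradedHom.exists_fg_map_eq {f : M →ₗ[A] M'} (hf : g.IsGradedHom g' f)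
    (hsurj : Function.Surjective f) {N' : Submodule A M'} (hN' : g'.IsHomogeneous N')
    (hFG : N'.FG) : ∃ N : Submodule A M, g.IsHomogeneous N ∧ N.FG ∧ N.map f = N' := by
  obtain ⟨T, hT, rfl⟩ := hN'.exists_finset hFG
  have hlift : ∀ t ∈ T, ∃ x, (∃ n, x ∈ g.gr n) ∧ f x = t := fun t ht => by
    obtain ⟨n, hn⟩ := hT t ht
    obtain ⟨x, hx, rfl⟩ := hf.exists_mem_gr_eq hsurj hn
    exact ⟨x, ⟨n, hx⟩, rfl⟩
  choose! l hl hfl using hlift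
  refine ⟨Submodule.span A (l '' T), isHomogeneous_span ?_,
    Submodule.fg_span (T.finite_toSet.image l), ?_⟩
  · rintro _ ⟨t, ht, rfl⟩
    exact hl t ht
  · rw [Submodule.map_span, Set.image_image, Set.image_congr hfl, Set.image_id']

variable (g)

def truncGE (N : Submodule A M) (D : ℤ) : Submodule A M :=
  Submodule.span A {x | x ∈ N ∧ ∃ n, D ≤ n ∧ x ∈ g.gr n}

variable {g}

theorem isHomogeneous_truncGE (N : Submodule A M) (D : ℤ) : g.IsHomogeneous (g.truncGE N D) :=
  isHomogeneous_span fun _ ⟨_, n, _, hn⟩ => ⟨n, hn⟩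

theorem mem_truncGE {N : Submodule A M} {D n : ℤ} {x : M} (hx : x ∈ N) (hn : D ≤ n)
    (hxn : x ∈ g.gr n) : x ∈ g.truncGE N D :=
  Submodule.subset_span ⟨hx, n, hn, hxn⟩

theorem IsGradedHom.truncGE_le_ker {f : M →ₗ[A] M'} (hf : g.IsGradedHom g' f)
    {N : Submodule A M} {D : ℤ} (hD : ∀ n ∈ g'.degrees (N.map f), n < D) :
    g.truncGE N D ≤ LinearMap.ker f := by
  refine Submodule.span_le.2 fun x ⟨hx, n, hn, hxn⟩ => ?_
  by_contra h0
  exact (hD n ⟨f x, Submodule.mem_map_of_mem hx, hf n x hxn, h0⟩).not_ge hn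

variable [GradedRing 𝒜]

theorem proj_smul_of_mem (a : A) {y : M} {m : ℤ} (hy : y ∈ g.gr m) (n : ℤ) :
    g.proj n (a • y) = (DirectSum.decompose 𝒜 a (n - m) : A) • y := by
  induction a using DirectSum.Decomposition.inductionOn 𝒜 with
  | zero => simp only [zero_smul, map_zero, DirectSum.decompose_zero, DirectSum.zero_apply,
      ZeroMemClass.coe_zero]
  | @homogeneous i b =>
    have hby : (b : A) • y ∈ g.gr (i + m) := g.smul_mem i m b y b.2 hy
    rw [DirectSum.decompose_coe]
    rcases eq_or_ne i (n - m) with rfl | hi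
    · rw [g.proj_of_mem_same (by rwa [sub_add_cancel] at hby), DirectSum.of_eq_same]
    · rw [g.proj_of_mem_ne hby (by omega), DirectSum.of_eq_of_ne _ _ _ hi.symm,
        ZeroMemClass.coe_zero, zero_smul]
  | add b c hb hc =>
    rw [add_smul, map_add, hb, hc, DirectSum.decompose_add, DirectSum.add_apply,
      AddSubgroup.coe_add, add_smul]

theorem proj_mem_span {S : Set M} (hS : ∀ s ∈ S, ∃ m, s ∈ g.gr m) {x : M}
    (hx : x ∈ Submodule.span A S) (n : ℤ) : g.proj n x ∈ Submodule.span A S := by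
  induction hx using Submodule.span_induction generalizing n with
  | mem s hs =>
    obtain ⟨m, hm⟩ := hS s hs
    rcases eq_or_ne m n with rfl | hmn
    · rw [g.proj_of_mem_same hm]
      exact Submodule.subset_span hs
    · rw [g.proj_of_mem_ne hm hmn]
      exact zero_mem _
  | zero => simp only [map_zero, zero_mem]
  | add x y _ _ hx hy => simpa only [map_add] using add_mem (hx n) (hy n)
  | smul a x _ hx =>
    obtain ⟨s, hs⟩ := g.exists_sum_proj x
    rw [← hs, Finset.smul_sum, map_sum]
    refine sum_mem fun m _ => ?_
    rw [g.proj_smul_of_mem a (g.proj_mem m x) n]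
    exact Submodule.smul_mem _ _ (hx m)

theorem IsHomogeneous.proj_mem {N : Submodule A M} (hN : g.IsHomogeneous N) {x : M} (hx : x ∈ N)
    (n : ℤ) : g.proj n x ∈ N := by
  rw [hN] at hx ⊢
  exact proj_mem_span (fun _ hs => hs.2) hx n

theorem IsHomogeneous.map {f : M →ₗ[A] M'} (hf : g.IsGradedHom g' f) {N : Submodule A M}
    (hN : g.IsHomogeneous N) : g'.IsHomogeneous (N.map f) := by
  refine isHomogeneous_of_forall_proj_mem ?_
  rintro _ ⟨x, hx, rfl⟩ n
  rw [← hf.map_proj]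
  exact Submodule.mem_map_of_mem (hN.proj_mem hx n)

theorem IsHomogeneous.comap {f : M →ₗ[A] M'} (hf : g.IsGradedHom g' f) {N : Submodule A M'}
    (hN : g'.IsHomogeneous N) : g.IsHomogeneous (N.comap f) := by
  refine isHomogeneous_of_forall_proj_mem fun x hx n => ?_
  rw [Submodule.mem_comap, hf.map_proj]
  exact hN.proj_mem hx n

theorem IsGradedHom.degrees_map_subset {f : M →ₗ[A] M'} (hf : g.IsGradedHom g' f)
    {N : Submodule A M} (hN : g.IsHomogeneous N) : g'.degrees (N.map f) ⊆ g.degrees N := by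
  rintro n ⟨_, ⟨x, hx, rfl⟩, hxn, hx0⟩
  refine ⟨g.proj n x, hN.proj_mem hx n, g.proj_mem n x, fun h0 => hx0 ?_⟩
  rw [← g'.proj_of_mem_same hxn, ← hf.map_proj, h0, map_zero]

theorem isFinitelyGraded_of_le_range {f : M →ₗ[A] M'} (hf : g.IsGradedHom g' f)
    (hinj : Function.Injective f) (hv : g.IsVFG) {N : Submodule A M'}
    (hN : g'.IsHomogeneous N) (hFG : N.FG) (hle : N ≤ LinearMap.range f) :
    g'.IsFinitelyGraded N := by
  have hmap : (N.comap f).map f = N := Submodule.map_comap_eq_of_le hle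
  have hfin := hv _ (hN.comap hf) (Submodule.fg_of_fg_map_injective f hinj (by rwa [hmap]))
  rw [← hmap]
  exact hfin.subset (hf.degrees_map_subset (hN.comap hf))

theorem isVFG_of_injective {f : M →ₗ[A] M'} (hf : g.IsGradedHom g' f)
    (hinj : Function.Injective f) (hv : g'.IsVFG) : g.IsVFG :=
  fun N hN hFG => (hv _ (hN.map hf) (hFG.map f)).subset (hf.degrees_subset_map hinj N)

theorem isVFG_of_surjective {f : M →ₗ[A] M'} (hf : g.IsGradedHom g' f)
    (hsurj : Function.Surjective f) (hv : g.IsVFG) : g'.IsVFG := by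
  intro N' hN' hFG
  obtain ⟨N, hN, hNfg, rfl⟩ := hf.exists_fg_map_eq hsurj hN' hFG
  exact (hv N hN hNfg).subset (hf.degrees_map_subset hN)

theorem truncGE_span_eq {T : Finset M} {d : M → ℤ} (hT : ∀ t ∈ T, t ∈ g.gr (d t)) (D : ℤ) :
    g.truncGE (Submodule.span A T) D =
      ⨆ t ∈ T, (idealGE 𝒜 (D - d t)).map (LinearMap.toSpanSingleton A M t) := by
  refine le_antisymm (Submodule.span_le.2 ?_) (iSup₂_le fun t ht => ?_)
  · rintro x ⟨hx, n, hn, hxn⟩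
    rw [SetLike.mem_coe, ← g.proj_of_mem_same hxn]
    obtain ⟨c, -, rfl⟩ := Submodule.mem_span_finset.1 hx
    rw [map_sum]
    refine sum_mem fun t ht => ?_
    rw [proj_smul_of_mem (c t) (hT t ht)]
    refine (le_iSup₂ (f := fun t (_ : t ∈ T) =>
      (idealGE 𝒜 (D - d t)).map (LinearMap.toSpanSingleton A M t)) t ht)
      (Submodule.mem_map_of_mem (Submodule.subset_span ⟨n - d t, by omega, SetLike.coe_mem _⟩))
  · rw [Submodule.map_le_iff_le_comap, idealGE, Submodule.span_le]
    rintro a ⟨m, hm, ha⟩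
    exact mem_truncGE (Submodule.smul_mem _ a (Submodule.subset_span ht)) (by omega : D ≤ m + d t)
      (g.smul_mem m (d t) a t ha (hT t ht))

theorem fg_truncGE_span {k : ℤ} (hfg : ∀ m : ℤ, k ≤ m → (idealGE 𝒜 m).FG) {T : Finset M}
    {d : M → ℤ} (hT : ∀ t ∈ T, t ∈ g.gr (d t)) {D : ℤ} (hD : ∀ t ∈ T, k ≤ D - d t) :
    (g.truncGE (Submodule.span A T) D).FG := by
  rw [truncGE_span_eq hT]
  exact Submodule.fg_biSup T _ fun t ht => (hfg _ (hD t ht)).map _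

theorem exists_le_of_mem_degrees_span (hpos : ∀ n : ℤ, n < 0 → 𝒜 n = ⊥) {T : Finset M}
    {d : M → ℤ} (hT : ∀ t ∈ T, t ∈ g.gr (d t)) {n : ℤ} (hn : n ∈ g.degrees (Submodule.span A T)) :
    ∃ t ∈ T, d t ≤ n := by
  obtain ⟨x, hx, hxn, hx0⟩ := hn
  by_contra! hlt
  refine hx0 ?_
  rw [← g.proj_of_mem_same hxn]
  obtain ⟨c, -, rfl⟩ := Submodule.mem_span_finset.1 hx
  rw [map_sum]
  refine Finset.sum_eq_zero fun t ht => ?_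
  have hc : (DirectSum.decompose 𝒜 (c t) (n - d t) : A) ∈ (⊥ : AddSubgroup A) :=
    (hpos _ (by linarith [hlt t ht])).le (SetLike.coe_mem _)
  rw [proj_smul_of_mem (c t) (hT t ht), AddSubgroup.mem_bot.1 hc, zero_smul]

theorem degrees_span_subset (hpos : ∀ n : ℤ, n < 0 → 𝒜 n = ⊥) {T : Finset M} {d : M → ℤ}
    (hT : ∀ t ∈ T, t ∈ g.gr (d t)) (D : ℤ) :
    g.degrees (Submodule.span A T) ⊆
      (⋃ t ∈ T, Set.Icc (d t) D) ∪ g.degrees (g.truncGE (Submodule.span A T) D) := by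
  intro n hn
  by_cases hDn : D ≤ n
  · obtain ⟨x, hx, hxn, hx0⟩ := hn
    exact Or.inr ⟨x, mem_truncGE hx hDn hxn, hxn, hx0⟩
  · obtain ⟨t, ht, hdt⟩ := exists_le_of_mem_degrees_span hpos hT hn
    exact Or.inl (Set.mem_biUnion ht ⟨hdt, by omega⟩)

end Module

theorem isVFG_shift {M : Type v} [AddCommGroup M] [Module A M] (g : GradedModuleData A 𝒜 M)
    (c : ℤ) (hv : g.IsVFG) (gS : GradedModuleData A 𝒜 M) (hgr : gS.gr = fun n => g.gr (n + c)) :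
    gS.IsVFG := by
  have hhom : ∀ x, (∃ n, x ∈ gS.gr n) ↔ ∃ n, x ∈ g.gr n := fun x => by
    rw [hgr]
    exact ⟨fun ⟨n, hn⟩ => ⟨n + c, hn⟩, fun ⟨n, hn⟩ => ⟨n - c, by simpa using hn⟩⟩
  intro N hN hFG
  have hfin := hv N (by simpa only [IsHomogeneous, hhom] using hN) hFG
  have hdeg : gS.degrees N = (· + c) ⁻¹' g.degrees N := by rw [degrees, hgr]; rfl
  rw [isFinitelyGraded_iff_finite_degrees, hdeg]
  exact hfin.preimage (add_left_injective c).injOn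

theorem isVFG_directSum [GradedRing 𝒜] {ι : Type v} {M : ι → Type v} [∀ i, AddCommGroup (M i)]
    [∀ i, Module A (M i)] (g : ∀ i, GradedModuleData A 𝒜 (M i)) (hv : ∀ i, (g i).IsVFG)
    (gD : GradedModuleData A 𝒜 (⨁ i, M i)) (hgr : gD.gr = directSumGrading g) : gD.IsVFG := by
  classical
  have hcomp : ∀ i, gD.IsGradedHom (g i) (DirectSum.component A ι M i) := fun i n x hx => by
    rw [hgr] at hx
    exact hx i
  intro N hN hFG
  obtain ⟨T, -, hT⟩ := hN.exists_finset hFG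
  set s := T.sup DFinsupp.support
  have hvanish : ∀ i ∉ s, N ≤ LinearMap.ker (DirectSum.component A ι M i) := fun i hi => by
    rw [hT, Submodule.span_le]
    intro t ht
    exact DFinsupp.notMem_support_iff.1 fun h => hi (Finset.le_sup (f := DFinsupp.support) ht h)
  refine (s.finite_toSet.biUnion fun i _ => hv i _ (hN.map (hcomp i)) (hFG.map _)).subset ?_
  rintro n ⟨x, hx, hxn, hx0⟩
  obtain ⟨i, hi⟩ : ∃ i, x i ≠ 0 := by
    by_contra! h
    exact hx0 (DFinsupp.ext h)
  have his : i ∈ s := by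
    by_contra h
    exact hi (hvanish i h hx)
  exact Set.mem_biUnion his ⟨x i, Submodule.mem_map_of_mem hx, hcomp i n x hxn, hi⟩

theorem isVFG_of_extension [GradedRing 𝒜] (hpos : ∀ n : ℤ, n < 0 → 𝒜 n = ⊥) {k : ℤ}
    (hfg : ∀ m : ℤ, k ≤ m → (idealGE 𝒜 m).FG)
    {M₁ M₂ M₃ : Type v} [AddCommGroup M₁] [Module A M₁] [AddCommGroup M₂] [Module A M₂]
    [AddCommGroup M₃] [Module A M₃] {g₁ : GradedModuleData A 𝒜 M₁}
    {g₂ : GradedModuleData A 𝒜 M₂} {g₃ : GradedModuleData A 𝒜 M₃}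
    {f : M₁ →ₗ[A] M₂} {g : M₂ →ₗ[A] M₃} (hf : g₁.IsGradedHom g₂ f) (hg : g₂.IsGradedHom g₃ g)
    (hinj : Function.Injective f) (hexact : LinearMap.range f = LinearMap.ker g)
    (hv₁ : g₁.IsVFG) (hv₃ : g₃.IsVFG) : g₂.IsVFG := by
  intro N hN hFG
  obtain ⟨T, hT, rfl⟩ := hN.exists_finset hFG
  choose! d hd using hT
  obtain ⟨D₀, hD₀⟩ := (hv₃ _ (hN.map hg) (hFG.map g)).bddAbove
  obtain ⟨B, hB⟩ := (T.finite_toSet.image d).bddAbove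
  -- `D > D₀` puts the tail in `ker g`; `k ≤ D - d t` makes each `A_{≥ D - d t}` f.g.
  set D := max (D₀ + 1) (k + B)
  have htail : g₂.IsFinitelyGraded (g₂.truncGE (Submodule.span A T) D) := by
    refine isFinitelyGraded_of_le_range hf hinj hv₁ (isHomogeneous_truncGE _ D)
      (fg_truncGE_span hfg hd fun t ht => ?_) (hexact ▸ hg.truncGE_le_ker fun n hn => ?_)
    · have := hB (Set.mem_image_of_mem d ht)
      omega
    · have := hD₀ hn
      omega
  exact ((T.finite_toSet.biUnion fun t _ => Set.finite_Icc (d t) D).union htail).subset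
    (degrees_span_subset hpos hd D)

end GradedModuleData

theorem stmt9_general (A : Type u) [Ring A] (𝒜 : ℤ → AddSubgroup A) [GradedRing 𝒜]
    (hpos : ∀ n : ℤ, n < 0 → 𝒜 n = ⊥)
    (k : ℤ) (hfg : ∀ m : ℤ, k ≤ m → (idealGE 𝒜 m).FG) :
    -- closed under graded submodules
    (∀ (M M' : Type v) (_ : AddCommGroup M) (_ : Module A M)
      (_ : AddCommGroup M') (_ : Module A M')
      (g : GradedModuleData A 𝒜 M) (g' : GradedModuleData A 𝒜 M')
      (f : M' →ₗ[A] M), Function.Injective f →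
        (∀ (n : ℤ) (x : M'), x ∈ g'.gr n → f x ∈ g.gr n) →
        g.IsVFG → g'.IsVFG) ∧
    -- closed under quotients (epimorphic images)
    (∀ (M M' : Type v) (_ : AddCommGroup M) (_ : Module A M)
      (_ : AddCommGroup M') (_ : Module A M')
      (g : GradedModuleData A 𝒜 M) (g' : GradedModuleData A 𝒜 M')
      (f : M →ₗ[A] M'), Function.Surjective f →
        (∀ (n : ℤ) (x : M), x ∈ g.gr n → f x ∈ g'.gr n) →
        g.IsVFG → g'.IsVFG) ∧
    -- closed under extensions
    (∀ (M₁ M₂ M₃ : Type v) (_ : AddCommGroup M₁) (_ : Module A M₁)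
      (_ : AddCommGroup M₂) (_ : Module A M₂)
      (_ : AddCommGroup M₃) (_ : Module A M₃)
      (g₁ : GradedModuleData A 𝒜 M₁) (g₂ : GradedModuleData A 𝒜 M₂)
      (g₃ : GradedModuleData A 𝒜 M₃)
      (f : M₁ →ₗ[A] M₂) (g : M₂ →ₗ[A] M₃), Function.Injective f →
        Function.Surjective g → LinearMap.range f = LinearMap.ker g →
        (∀ (n : ℤ) (x : M₁), x ∈ g₁.gr n → f x ∈ g₂.gr n) →
        (∀ (n : ℤ) (x : M₂), x ∈ g₂.gr n → g x ∈ g₃.gr n) →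
        g₁.IsVFG → g₃.IsVFG → g₂.IsVFG) ∧
    -- closed under coproducts
    (∀ (ι : Type v) (M : ι → Type v) (_ : ∀ i, AddCommGroup (M i))
      (_ : ∀ i, Module A (M i)) (g : ∀ i, GradedModuleData A 𝒜 (M i)),
        (∀ i, (g i).IsVFG) →
        ∀ gD : GradedModuleData A 𝒜 (⨁ i, M i),
          gD.gr = directSumGrading g → gD.IsVFG) ∧
    -- rigid: closed under shifts
    (∀ (M : Type v) (_ : AddCommGroup M) (_ : Module A M)
      (g : GradedModuleData A 𝒜 M) (c : ℤ), g.IsVFG →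
        ∀ gS : GradedModuleData A 𝒜 M, gS.gr = (fun n => g.gr (n + c)) →
          gS.IsVFG) :=
  ⟨fun _ _ _ _ _ _ _ _ _ hinj hf hv => isVFG_of_injective hf hinj hv,
    fun _ _ _ _ _ _ _ _ _ hsurj hf hv => isVFG_of_surjective hf hsurj hv,
    fun _ _ _ _ _ _ _ _ _ _ _ _ _ _ hinj _ hexact hf hg hv₁ hv₃ =>
      isVFG_of_extension hpos hfg hf hg hinj hexact hv₁ hv₃,
    fun _ _ _ _ g hv gD hgr => isVFG_directSum g hv gD hgr,
    fun _ _ _ g c hv gS hgr => isVFG_shift g c hv gS hgr⟩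

/-- Let `A = ⊕_{n ≥ 0} A_n` be a positively graded ring such that `A_{≥m}` is a finitely
generated left ideal for all `m ≥ k` (some `k > 0`).  Then the class `T` of virtually
finitely graded graded left `A`-modules is a hereditary torsion class in `A`-Gr:
closed under (graded) submodules, quotients, extensions and coproducts, and moreover
closed under degree shifts (rigid). -/
theorem stmt9 (A : Type u) [Ring A] (𝒜 : ℤ → AddSubgroup A) [GradedRing 𝒜]
    (hpos : ∀ n : ℤ, n < 0 → 𝒜 n = ⊥)
    (k : ℤ) (hk : 0 < k) (hfg : ∀ m : ℤ, k ≤ m → (idealGE 𝒜 m).FG) :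
    -- closed under graded submodules
    (∀ (M M' : Type v) (_ : AddCommGroup M) (_ : Module A M)
      (_ : AddCommGroup M') (_ : Module A M')
      (g : GradedModuleData A 𝒜 M) (g' : GradedModuleData A 𝒜 M')
      (f : M' →ₗ[A] M), Function.Injective f →
        (∀ (n : ℤ) (x : M'), x ∈ g'.gr n → f x ∈ g.gr n) →
        g.IsVFG → g'.IsVFG) ∧
    -- closed under quotients (epimorphic images)
    (∀ (M M' : Type v) (_ : AddCommGroup M) (_ : Module A M)
      (_ : AddCommGroup M') (_ : Module A M')
      (g : GradedModuleData A 𝒜 M) (g' : GradedModuleData A 𝒜 M')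
      (f : M →ₗ[A] M'), Function.Surjective f →
        (∀ (n : ℤ) (x : M), x ∈ g.gr n → f x ∈ g'.gr n) →
        g.IsVFG → g'.IsVFG) ∧
    -- closed under extensions
    (∀ (M₁ M₂ M₃ : Type v) (_ : AddCommGroup M₁) (_ : Module A M₁)
      (_ : AddCommGroup M₂) (_ : Module A M₂)
      (_ : AddCommGroup M₃) (_ : Module A M₃)
      (g₁ : GradedModuleData A 𝒜 M₁) (g₂ : GradedModuleData A 𝒜 M₂)
      (g₃ : GradedModuleData A 𝒜 M₃)
      (f : M₁ →ₗ[A] M₂) (g : M₂ →ₗ[A] M₃), Function.Injective f →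
        Function.Surjective g → LinearMap.range f = LinearMap.ker g →
        (∀ (n : ℤ) (x : M₁), x ∈ g₁.gr n → f x ∈ g₂.gr n) →
        (∀ (n : ℤ) (x : M₂), x ∈ g₂.gr n → g x ∈ g₃.gr n) →
        g₁.IsVFG → g₃.IsVFG → g₂.IsVFG) ∧
    -- closed under coproducts
    (∀ (ι : Type v) (M : ι → Type v) (_ : ∀ i, AddCommGroup (M i))
      (_ : ∀ i, Module A (M i)) (g : ∀ i, GradedModuleData A 𝒜 (M i)),
        (∀ i, (g i).IsVFG) →
        ∀ gD : GradedModuleData A 𝒜 (⨁ i, M i),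
          gD.gr = directSumGrading g → gD.IsVFG) ∧
    -- rigid: closed under shifts
    (∀ (M : Type v) (_ : AddCommGroup M) (_ : Module A M)
      (g : GradedModuleData A 𝒜 M) (c : ℤ), g.IsVFG →
        ∀ gS : GradedModuleData A 𝒜 M, gS.gr = (fun n => g.gr (n + c)) →
          gS.IsVFG) :=
  stmt9_general A 𝒜 hpos k hfg
end
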